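/- Let A be a nonnegative primitive tensor of order m and dimension n ≥ 2 such that every index j ∈ [n] lies on some cycle of M(A) of length at most n−1. Then γ(A) ≤ (n−1)². -/

import Mathlib

open Finset

/- An order-`m` dimension-`n` nonnegative tensor is encoded as
`A : Fin n → (Fin (m-1) → Fin n) → ℝ`, with `A i t = a_{i t₁ ⋯ t_{m-1}}`. -/

/-- The majorization matrix `M(A)_{ij} = a_{ij⋯j}`. -/
def maj (n m : ℕ) (A : Fin n → (Fin (m-1) → Fin n) → ℝ) :
    Matrix (Fin n) (Fin n) ℝ :=
  fun i j => A i (fun _ => j)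

/-- The majorization matrices of the Shao-product powers of `A`:
`majPow n m A k = M(A^k)`, via the recursion
`M(A^{k+1})_{uj} = Σ_{j₂,…,j_m} a_{u j₂ ⋯ j_m} M(A^k)_{j₂ j} ⋯ M(A^k)_{j_m j}`
(with `M(A^0)` the identity, so that `majPow n m A 1 = maj n m A`). -/
def majPow (n m : ℕ) (A : Fin n → (Fin (m-1) → Fin n) → ℝ) :
    ℕ → Matrix (Fin n) (Fin n) ℝ
  | 0 => 1
  | k + 1 => fun u j =>
      ∑ t : Fin (m-1) → Fin n, A u t * ∏ i, majPow n m A k (t i) j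

/-- `A` is primitive: `M(A^r) > 0` entrywise for some positive `r`. -/
def Primitive (n m : ℕ) (A : Fin n → (Fin (m-1) → Fin n) → ℝ) : Prop :=
  ∃ r, 0 < r ∧ ∀ u j, 0 < majPow n m A r u j

/-- `i` lies on a cycle of length `t`, `1 ≤ t ≤ n-1`, of `M(A)`. -/
def OnShortCycle (n m : ℕ) (A : Fin n → (Fin (m-1) → Fin n) → ℝ)
    (i : Fin n) : Prop :=
  ∃ t : ℕ, 1 ≤ t ∧ t ≤ n - 1 ∧ ∃ c : ℕ → Fin n, c 0 = i ∧
    (∀ s, s < t → 0 < maj n m A (c ((s + 1) % t)) (c s)) ∧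
    (∀ s₁ s₂, s₁ < t → s₂ < t → c s₁ = c s₂ → s₁ = s₂)

/-! Let `F(S) = {u | a_{u t₂ ⋯ t_m} > 0 for some t with all tᵢ ∈ S}` (`supportStep`). The
positive entries of column `j` of `M(A^k)` form the set `F^k {j}`, and `F` is monotone. If `j`
lies on a cycle of length `t ≤ n - 1`, then `j ∈ F^t {j}`, so the sets `F^{kt} {j}` increase
with `k`; once two consecutive ones agree the sequence is constant, and by primitivity it must
then be constantly `[n]`. Hence the sets grow strictly until they are all of `[n]`, which
happens for some `k ≤ n - 1`, i.e. at exponent `(n - 1) t ≤ (n - 1)²`. -/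

open Function Set

section IterateFillsUniv

variable {α : Type*} {g : Set α → Set α} {s : Set α}

lemma iterate_eq_univ_of_le (hg : g univ = univ) {r k : ℕ} (hr : g^[r] s = univ)
    (hrk : r ≤ k) : g^[k] s = univ := by
  obtain ⟨d, rfl⟩ := Nat.exists_eq_add_of_le hrk
  rw [add_comm, iterate_add_apply, hr, iterate_fixed hg]

lemma map_univ_of_iterate_eq_univ (hg : Monotone g) {r : ℕ} (hr : 0 < r)
    (h : g^[r] s = univ) : g univ = univ := by
  obtain ⟨r, rfl⟩ : ∃ r', r = r' + 1 := ⟨r - 1, by omega⟩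
  rw [iterate_succ_apply'] at h
  exact Set.univ_subset_iff.1 (h.symm.trans_subset (hg (Set.subset_univ _)))

lemma iterate_eq_univ_of_iterate_succ_eq (hg : Monotone g) (hsg : s ⊆ g s) {N : ℕ}
    (hN : g^[N] s = univ) {k : ℕ} (hk : g^[k + 1] s = g^[k] s) :
    g^[k] s = univ := by
  have hfix : g^[N + k] s = g^[k] s := by
    rw [iterate_add_apply]
    exact iterate_fixed (by rwa [← iterate_succ_apply' g k s]) N
  rw [← hfix, ← Set.univ_subset_iff, ← hN]
  exact hg.monotone_iterate_of_le_map hsg (by omega)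

lemma iterate_eq_univ_or_le_ncard [Finite α] (hg : Monotone g) (hsg : s ⊆ g s) {N : ℕ}
    (hN : g^[N] s = univ) (hs : s.Nonempty) (k : ℕ) :
    g^[k] s = univ ∨ k + 1 ≤ (g^[k] s).ncard := by
  have hchain := hg.monotone_iterate_of_le_map hsg
  induction k with
  | zero => exact Or.inr hs.ncard_pos
  | succ k ih =>
    rcases ih with hfull | hcard
    · left
      rw [← Set.univ_subset_iff, ← hfull]
      exact hchain k.le_succ
    by_cases hstall : g^[k + 1] s = g^[k] s
    · exact Or.inl (hstall ▸ iterate_eq_univ_of_iterate_succ_eq hg hsg hN hstall)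
    · right
      have : (g^[k] s).ncard < (g^[k + 1] s).ncard :=
        ncard_lt_ncard (ssubset_of_subset_of_ne (hchain k.le_succ) (Ne.symm hstall))
      omega

lemma iterate_card_sub_one_eq_univ [Finite α] (hg : Monotone g) (hsg : s ⊆ g s) {N : ℕ}
    (hN : g^[N] s = univ) (hs : s.Nonempty) :
    g^[Nat.card α - 1] s = univ := by
  have : Nonempty α := hs.to_type
  have hcard := Nat.card_pos (α := α)
  refine (iterate_eq_univ_or_le_ncard hg hsg hN hs _).elim id fun hle ↦ ?_
  exact eq_of_subset_of_ncard_le (Set.subset_univ _) (by rw [ncard_univ]; omega)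

end IterateFillsUniv

section SupportStep

variable {n m : ℕ} {A : Fin n → (Fin (m-1) → Fin n) → ℝ}

variable (n m A) in
def supportStep (S : Set (Fin n)) : Set (Fin n) :=
  {u | ∃ t, 0 < A u t ∧ ∀ i, t i ∈ S}

lemma supportStep_mono : Monotone (supportStep n m A) :=
  fun _ _ hST _ ⟨t, ht, hts⟩ ↦ ⟨t, ht, fun i ↦ hST (hts i)⟩

lemma mem_supportStep_of_maj_pos {S : Set (Fin n)} {u v : Fin n} (huv : 0 < maj n m A u v)
    (hv : v ∈ S) : u ∈ supportStep n m A S :=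
  ⟨fun _ ↦ v, huv, fun _ ↦ hv⟩

lemma majPow_nonneg (hA : ∀ u t, 0 ≤ A u t) (k : ℕ) (u j : Fin n) :
    0 ≤ majPow n m A k u j := by
  induction k generalizing u j with
  | zero =>
    simp only [majPow, Matrix.one_apply]
    split <;> norm_num
  | succ k ih =>
    exact sum_nonneg fun t _ ↦ mul_nonneg (hA u t) (prod_nonneg fun i _ ↦ ih _ _)

lemma majPow_succ_pos_iff (hA : ∀ u t, 0 ≤ A u t) (k : ℕ) (u j : Fin n) :
    0 < majPow n m A (k + 1) u j ↔ ∃ t, 0 < A u t ∧ ∀ i, 0 < majPow n m A k (t i) j := by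
  have hterm (t : Fin (m-1) → Fin n) : 0 ≤ A u t * ∏ i, majPow n m A k (t i) j :=
    mul_nonneg (hA u t) (prod_nonneg fun i _ ↦ majPow_nonneg hA k _ _)
  simp only [majPow, sum_pos_iff_of_nonneg fun t _ ↦ hterm t, Finset.mem_univ, true_and]
  refine exists_congr fun t ↦ ?_
  simp only [(hterm t).lt_iff_ne', (hA u t).lt_iff_ne', (majPow_nonneg hA _ _ _).lt_iff_ne',
    ne_eq, mul_eq_zero, prod_eq_zero_iff, not_or, not_exists, Finset.mem_univ, true_and]

lemma majPow_pos_iff_mem_iterate (hA : ∀ u t, 0 ≤ A u t) (k : ℕ) (u j : Fin n) :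
    0 < majPow n m A k u j ↔ u ∈ (supportStep n m A)^[k] {j} := by
  induction k generalizing u with
  | zero => simp [majPow, Matrix.one_apply, apply_ite]
  | succ k ih =>
    rw [majPow_succ_pos_iff hA, iterate_succ_apply']
    simp only [supportStep, mem_ofPred_eq, ih]

end SupportStep

lemma Primitive.exists_iterate_eq_univ {n m : ℕ} {A : Fin n → (Fin (m-1) → Fin n) → ℝ}
    (hA : ∀ u t, 0 ≤ A u t) (h : Primitive n m A) :
    ∃ r, 0 < r ∧ ∀ j, (supportStep n m A)^[r] {j} = univ := by
  obtain ⟨r, hr, hpos⟩ := h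
  exact ⟨r, hr, fun j ↦ eq_univ_of_forall fun u ↦
    (majPow_pos_iff_mem_iterate hA r u j).1 (hpos u j)⟩

lemma OnShortCycle.exists_mem_iterate {n m : ℕ} {A : Fin n → (Fin (m-1) → Fin n) → ℝ}
    {j : Fin n} (h : OnShortCycle n m A j) :
    ∃ t, 1 ≤ t ∧ t ≤ n - 1 ∧ j ∈ (supportStep n m A)^[t] {j} := by
  obtain ⟨t, ht, htn, c, hc0, hedge, -⟩ := h
  have hwalk : ∀ s ≤ t, c (s % t) ∈ (supportStep n m A)^[s] {j} := by
    intro s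
    induction s with
    | zero => simp [hc0]
    | succ s ih =>
      intro hs
      have hprev := ih (Nat.le_of_succ_le hs)
      rw [Nat.mod_eq_of_lt hs] at hprev
      rw [iterate_succ_apply']
      exact mem_supportStep_of_maj_pos (hedge s hs) hprev
  exact ⟨t, ht, htn, by simpa [hc0] using hwalk t le_rfl⟩

theorem stmt_17_general (n m : ℕ) (hn : 2 ≤ n)
    (A : Fin n → (Fin (m-1) → Fin n) → ℝ) (hA : ∀ u t, 0 ≤ A u t)
    (hprim : Primitive n m A)
    (hcyc : ∀ j : Fin n, OnShortCycle n m A j) :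
    sInf {r : ℕ | 0 < r ∧ ∀ u j : Fin n, 0 < majPow n m A r u j}
      ≤ (n - 1) ^ 2 := by
  obtain ⟨r, hr, hfull⟩ := hprim.exists_iterate_eq_univ hA
  set F := supportStep n m A
  have hFuniv : F univ = univ :=
    map_univ_of_iterate_eq_univ supportStep_mono hr (hfull ⟨0, by omega⟩)
  have hcol (j : Fin n) : F^[(n - 1) ^ 2] {j} = univ := by
    obtain ⟨t, ht, htn, hj⟩ := (hcyc j).exists_mem_iterate
    have hFt : (F^[t])^[r] {j} = univ := by
      rw [← iterate_mul]
      exact iterate_eq_univ_of_le hFuniv (hfull j) (Nat.le_mul_of_pos_left r ht)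
    have hfill := iterate_card_sub_one_eq_univ (supportStep_mono.iterate t)
      (singleton_subset_iff.2 hj) hFt (singleton_nonempty j)
    rw [Nat.card_fin, ← iterate_mul] at hfill
    exact iterate_eq_univ_of_le hFuniv hfill (by rw [sq]; exact Nat.mul_le_mul_right _ htn)
  exact Nat.sInf_le ⟨pow_pos (by omega) 2,
    fun u j ↦ (majPow_pos_iff_mem_iterate hA _ u j).2 (hcol j ▸ mem_univ u)⟩

/-- if every index lies on a short cycle of `M(A)`,
then `γ(A) ≤ (n-1)²`. -/
theorem stmt_17 (n m : ℕ) (hm : 2 ≤ m) (hn : 2 ≤ n)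
    (A : Fin n → (Fin (m-1) → Fin n) → ℝ) (hA : ∀ u t, 0 ≤ A u t)
    (hprim : Primitive n m A)
    (hcyc : ∀ j : Fin n, OnShortCycle n m A j) :
    sInf {r : ℕ | 0 < r ∧ ∀ u j : Fin n, 0 < majPow n m A r u j}
      ≤ (n - 1) ^ 2 :=
  stmt_17_general n m hn A hA hprim hcyc
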